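/- arXiv:2210.03372 — 2 statements merged into one kernel-verified Lean document; each statement's English description precedes it below -/
import Mathlib

section
/- (Gradient alignment dominates pseudo-gradient alignment, deterministic form.) Let w_1,...,w_m ∈ ℝ^n be pairwise orthogonal, x_1, x_2 ∈ ℝ^n, α ≥ 0. Define g_1 = (2/m)·Σ_i ReLU(w_i·x_1)·w_i, g_2 = (2/m)·Σ_i ReLU(w_i·x_2 + (2α/m)·ReLU(w_i·x_1)·‖w_i‖²)·w_i, and g_2* = (2/m)·Σ_i ReLU(w_i·x_2)·w_i. Then g_2·g_1 ≥ g_2*·g_1. -/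
open RealInnerProductSpace

/-!
Expanding both inner products in the pairwise orthogonal family `wᵢ` leaves only the diagonal
terms, so `⟪g, g₁⟫ = (2/m)² ∑ᵢ cᵢ ReLU(⟪wᵢ, x₁⟫) ‖wᵢ‖²` for `g = (2/m) ∑ᵢ cᵢ wᵢ`. The weights
`ReLU(⟪wᵢ, x₁⟫) ‖wᵢ‖²` are nonnegative, and the coefficients of `g₂` dominate those of `g₂*`
termwise because the update adds the nonnegative quantity `(2α/m) ReLU(⟪wᵢ, x₁⟫) ‖wᵢ‖²` inside
the monotone ReLU.
-/

section OrthogonalFamily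

variable {ι E : Type*} [Fintype ι] [NormedAddCommGroup E] [InnerProductSpace ℝ E]
  {w : ι → E}

theorem inner_sum_smul_sum_smul_of_pairwise_inner_eq_zero
    (horth : Pairwise fun i j => ⟪w i, w j⟫ = 0) (a b : ι → ℝ) :
    ⟪∑ i, a i • w i, ∑ i, b i • w i⟫ = ∑ i, a i * b i * ‖w i‖ ^ 2 := by
  rw [sum_inner]
  refine Finset.sum_congr rfl fun i _ => ?_
  rw [inner_sum, Finset.sum_eq_single i]
  · rw [real_inner_smul_left, real_inner_smul_right, real_inner_self_eq_norm_sq]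
    ring
  · intro j _ hji
    rw [real_inner_smul_left, real_inner_smul_right, horth hji.symm]
    ring
  · simp

theorem inner_sum_smul_sum_smul_mono_of_pairwise_inner_eq_zero
    (horth : Pairwise fun i j => ⟪w i, w j⟫ = 0) {a a' b : ι → ℝ}
    (ha : ∀ i, a i ≤ a' i) (hb : ∀ i, 0 ≤ b i) :
    ⟪∑ i, a i • w i, ∑ i, b i • w i⟫ ≤ ⟪∑ i, a' i • w i, ∑ i, b i • w i⟫ := by
  rw [inner_sum_smul_sum_smul_of_pairwise_inner_eq_zero horth,
    inner_sum_smul_sum_smul_of_pairwise_inner_eq_zero horth]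
  gcongr with i
  exacts [hb i, ha i]

end OrthogonalFamily

/-- Gradient alignment dominates pseudo-gradient alignment (deterministic form):
with pairwise orthogonal rows `wᵢ`, `g₂·g₁ ≥ g₂*·g₁` where `g₁, g₂, g₂*` are the L4A
gradients at the first sample, at the second sample after the update `α·g₁`, and at the
second sample ignoring the update, respectively. -/
theorem stmt_10 (m n : ℕ) (w : Fin m → EuclideanSpace ℝ (Fin n))
    (horth : ∀ i j, i ≠ j → ⟪w i, w j⟫ = 0)
    (x₁ x₂ : EuclideanSpace ℝ (Fin n)) (α : ℝ) (hα : 0 ≤ α)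
    (g₁ g₂ g₂star : EuclideanSpace ℝ (Fin n))
    (hg₁ : g₁ = (2 / (m : ℝ)) • ∑ i, (max ⟪w i, x₁⟫ 0) • w i)
    (hg₂ : g₂ = (2 / (m : ℝ)) • ∑ i,
      (max (⟪w i, x₂⟫ + (2 * α / (m : ℝ)) * max ⟪w i, x₁⟫ 0 * ‖w i‖ ^ 2) 0) • w i)
    (hg₂star : g₂star = (2 / (m : ℝ)) • ∑ i, (max ⟪w i, x₂⟫ 0) • w i) :
    ⟪g₂, g₁⟫ ≥ ⟪g₂star, g₁⟫ := by
  have hcoeff : ∀ i, max ⟪w i, x₂⟫ 0 ≤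
      max (⟪w i, x₂⟫ + (2 * α / (m : ℝ)) * max ⟪w i, x₁⟫ 0 * ‖w i‖ ^ 2) 0 := fun i => by
    gcongr
    exact le_add_of_nonneg_right (by positivity)
  subst hg₁ hg₂ hg₂star
  simp only [real_inner_smul_left, real_inner_smul_right]
  gcongr
  exact inner_sum_smul_sum_smul_mono_of_pairwise_inner_eq_zero horth hcoeff
    fun i => le_max_right _ _
end

section
/- Under the setup of the previous statement, g_2·g_1 − g_2*·g_1 = (4/m²)·Σ_i [ReLU(w_i·x_2 + (2α/m)·ReLU(w_i·x_1)·‖w_i‖²) − ReLU(w_i·x_2)]·ReLU(w_i·x_1)·‖w_i‖², and each summand is nonnegative. -/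
open RealInnerProductSpace Finset

theorem inner_sum_smul_sum_smul_of_pairwise_orthogonal {ι E : Type*} [Fintype ι]
    [NormedAddCommGroup E] [InnerProductSpace ℝ E] {w : ι → E}
    (hw : Pairwise fun i j => ⟪w i, w j⟫ = 0) (a b : ι → ℝ) :
    ⟪∑ i, a i • w i, ∑ i, b i • w i⟫ = ∑ i, a i * b i * ‖w i‖ ^ 2 := by
  classical
  simp_rw [sum_inner, inner_sum, real_inner_smul_left, real_inner_smul_right]
  refine sum_congr rfl fun i _ => ?_
  rw [sum_eq_single i (fun j _ hji => by rw [hw hji.symm, mul_zero, mul_zero]) (by simp),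
    real_inner_self_eq_norm_sq, mul_assoc]

theorem max_add_zero_sub_max_zero_nonneg {a δ : ℝ} (hδ : 0 ≤ δ) :
    0 ≤ max (a + δ) 0 - max a 0 :=
  sub_nonneg.2 (max_le_max_right 0 (le_add_of_nonneg_right hδ))

/-- Explicit expansion of the gradient-alignment difference: with pairwise orthogonal `wᵢ`,
`g₂·g₁ − g₂*·g₁ = (4/m²)·∑ᵢ [ReLU(wᵢ·x₂ + (2α/m)·ReLU(wᵢ·x₁)·‖wᵢ‖²) − ReLU(wᵢ·x₂)]·ReLU(wᵢ·x₁)·‖wᵢ‖²`,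
and each summand is nonnegative. -/
theorem stmt_11 (m n : ℕ) (w : Fin m → EuclideanSpace ℝ (Fin n))
    (horth : ∀ i j, i ≠ j → ⟪w i, w j⟫ = 0)
    (x₁ x₂ : EuclideanSpace ℝ (Fin n)) (α : ℝ) (hα : 0 ≤ α)
    (g₁ g₂ g₂star : EuclideanSpace ℝ (Fin n))
    (hg₁ : g₁ = (2 / (m : ℝ)) • ∑ i, (max ⟪w i, x₁⟫ 0) • w i)
    (hg₂ : g₂ = (2 / (m : ℝ)) • ∑ i,
      (max (⟪w i, x₂⟫ + (2 * α / (m : ℝ)) * max ⟪w i, x₁⟫ 0 * ‖w i‖ ^ 2) 0) • w i)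
    (hg₂star : g₂star = (2 / (m : ℝ)) • ∑ i, (max ⟪w i, x₂⟫ 0) • w i) :
    ⟪g₂, g₁⟫ - ⟪g₂star, g₁⟫ = (4 / (m : ℝ) ^ 2) * ∑ i,
        (max (⟪w i, x₂⟫ + (2 * α / (m : ℝ)) * max ⟪w i, x₁⟫ 0 * ‖w i‖ ^ 2) 0
          - max ⟪w i, x₂⟫ 0) * max ⟪w i, x₁⟫ 0 * ‖w i‖ ^ 2 ∧
      ∀ i, 0 ≤ (max (⟪w i, x₂⟫ + (2 * α / (m : ℝ)) * max ⟪w i, x₁⟫ 0 * ‖w i‖ ^ 2) 0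
          - max ⟪w i, x₂⟫ 0) * max ⟪w i, x₁⟫ 0 * ‖w i‖ ^ 2 := by
  refine ⟨?_, fun i => ?_⟩
  · rw [← inner_sub_left, hg₁, hg₂, hg₂star, ← smul_sub, ← sum_sub_distrib]
    simp_rw [← sub_smul]
    rw [real_inner_smul_left, real_inner_smul_right,
      inner_sum_smul_sum_smul_of_pairwise_orthogonal horth, ← mul_assoc]
    congr 1
    ring
  · have hrelu : 0 ≤ max ⟪w i, x₁⟫ 0 := le_max_right _ _
    have hshift : 0 ≤ 2 * α / (m : ℝ) * max ⟪w i, x₁⟫ 0 * ‖w i‖ ^ 2 := by positivity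
    exact mul_nonneg (mul_nonneg (max_add_zero_sub_max_zero_nonneg hshift) hrelu) (sq_nonneg _)
end
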